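/- Consider Φ(x) = f(x) + g(c(x)) under the full-convexity assumptions (f C¹ convex, g proper lsc convex, c C¹ and (-hzn g)-convex). A pair (x̄, ȳ) satisfies the stationarity conditions ∇f(x̄) + c'(x̄)ᵀȳ = 0 and ȳ ∈ ∂g(c(x̄)) if and only if (x̄, ȳ) is a saddle point of the Lagrangian L(x, y) := f(x) + ⟨y, c(x)⟩ - g*(y), i.e., L(x̄, y) ≤ L(x̄, ȳ) ≤ L(x, ȳ) for all x ∈ ℝ^n, y ∈ ℝ^m. -/

import Mathlib

open scoped RealInnerProductSpace

noncomputable section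

abbrev Eu (m : ℕ) := EuclideanSpace ℝ (Fin m)

def EProper {E : Type*} (φ : E → EReal) : Prop :=
  (∃ x, φ x ≠ ⊤) ∧ ∀ x, φ x ≠ ⊥

def EConvexOn {E : Type*} [AddCommGroup E] [Module ℝ E] (φ : E → EReal) : Prop :=
  ∀ x y : E, ∀ a b : ℝ, 0 ≤ a → 0 ≤ b → a + b = 1 →
    φ (a • x + b • y) ≤ (a : EReal) * φ x + (b : EReal) * φ y

def edom {E : Type*} (φ : E → EReal) : Set E := {x | φ x ≠ ⊤}

def hzn {E : Type*} [AddCommGroup E] (φ : E → EReal) : Set E :=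
  {v | ∀ z ∈ edom φ, φ (z + v) ≤ φ z}

/-- `c` is `(-hzn g)`-convex. -/
def HznConvex {n m : ℕ} (g : Eu m → EReal) (c : Eu n → Eu m) : Prop :=
  ∀ x xp : Eu n, ∀ l : ℝ, 0 ≤ l → l ≤ 1 →
    c (l • x + (1 - l) • xp) - l • c x - (1 - l) • c xp ∈ hzn g

/-- Convex (Fenchel) conjugate. -/
def econj {m : ℕ} (φ : Eu m → EReal) (y : Eu m) : EReal :=
  ⨆ z, ((inner ℝ z y : ℝ) : EReal) - φ z

/-- The (generalized) Lagrangian `L(x,y) = f(x) + ⟨y, c(x)⟩ - g*(y)`. -/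
def Lagr {n m : ℕ} (f : Eu n → ℝ) (g : Eu m → EReal) (c : Eu n → Eu m)
    (x : Eu n) (y : Eu m) : EReal :=
  ((f x + inner ℝ y (c x) : ℝ) : EReal) - econj g y

/-- Dual function `M(y) = inf_x L(x,y)`. -/
def dualFn {n m : ℕ} (f : Eu n → ℝ) (g : Eu m → EReal) (c : Eu n → Eu m)
    (y : Eu m) : EReal :=
  ⨅ x, Lagr f g c x y

/-- Primal objective `Φ(x) = f(x) + g(c(x))`. -/
def primalFn {n m : ℕ} (f : Eu n → ℝ) (g : Eu m → EReal) (c : Eu n → Eu m)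
    (x : Eu n) : EReal :=
  ((f x : ℝ) : EReal) + g (c x)

/-- Convex subdifferential of an extended-real-valued function. -/
def esubdiff {m : ℕ} (g : Eu m → EReal) (z₀ : Eu m) : Set (Eu m) :=
  {y | ∀ z, g z₀ + ((inner ℝ y (z - z₀) : ℝ) : EReal) ≤ g z}

/-- The set of Lagrange multipliers associated with `xb`. -/
def multSet {n m : ℕ} (f : Eu n → ℝ) (g : Eu m → EReal) (c : Eu n → Eu m)
    (xb : Eu n) : Set (Eu m) :=
  {y | y ∈ esubdiff g (c xb) ∧
    ∀ d : Eu n, fderiv ℝ f xb d + (inner ℝ y (fderiv ℝ c xb d) : ℝ) = 0}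

section Helpers
variable {m : ℕ}

lemma fenchel_young (g : Eu m → EReal) (y z : Eu m) :
    ((inner ℝ z y : ℝ) : EReal) - g z ≤ econj g y := le_iSup (fun z => ((inner ℝ z y : ℝ) : EReal) - g z) z

lemma econj_ne_bot {g : Eu m → EReal} (hgp : EProper g) (y : Eu m) : econj g y ≠ ⊥ := by
  obtain ⟨z, hz⟩ := hgp.1
  have hz' := hgp.2 z
  have h := fenchel_young g y z
  lift g z to ℝ using ⟨hz, hz'⟩ with r hr
  intro hbot
  rw [hbot, le_bot_iff, ← EReal.coe_sub] at h
  exact EReal.coe_ne_bot _ h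

/-- If `yb ∈ ∂g z₀` and `g` is proper then `g z₀` is real. -/
lemma subdiff_finite {g : Eu m → EReal} (hgp : EProper g) {z₀ yb : Eu m}
    (hs : yb ∈ esubdiff g z₀) : g z₀ ≠ ⊤ ∧ g z₀ ≠ ⊥ := by
  refine ⟨?_, hgp.2 z₀⟩
  obtain ⟨z, hz⟩ := hgp.1
  intro htop
  have h := hs z
  rw [htop] at h
  rw [EReal.top_add_of_ne_bot (EReal.coe_ne_bot _)] at h
  exact hz (top_le_iff.1 h)

end Helpers
section Helpers2
variable {m : ℕ}

lemma ereal_real {g : Eu m → EReal} (hgp : EProper g) {z : Eu m} (ht : g z ≠ ⊤) :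
    ∃ t : ℝ, g z = (t : EReal) := ⟨(g z).toReal, (EReal.coe_toReal ht (hgp.2 z)).symm⟩

lemma subdiff_conj {g : Eu m → EReal} (hgp : EProper g) {z₀ yb : Eu m}
    (hs : yb ∈ esubdiff g z₀) :
    ∃ gz : ℝ, g z₀ = (gz : EReal) ∧ econj g yb = ((inner ℝ z₀ yb - gz : ℝ) : EReal) := by
  obtain ⟨hnt, _⟩ := subdiff_finite hgp hs
  obtain ⟨gz, hgz⟩ := ereal_real hgp hnt
  refine ⟨gz, hgz, le_antisymm ?_ ?_⟩
  · refine iSup_le fun z => ?_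
    rcases eq_or_ne (g z) ⊤ with ht | ht
    · rw [ht, EReal.sub_top]; exact bot_le
    obtain ⟨t, hgt⟩ := ereal_real hgp ht
    have h := hs z
    rw [hgz, hgt, ← EReal.coe_add, EReal.coe_le_coe_iff] at h
    rw [hgt, ← EReal.coe_sub, EReal.coe_le_coe_iff]
    simp only [inner_sub_right] at h
    linarith [h, real_inner_comm yb z, real_inner_comm yb z₀]
  · have h := fenchel_young g yb z₀
    rw [hgz, ← EReal.coe_sub] at h
    exact h

end Helpers2
section Sep
open Topology Filter
variable {m : ℕ}

/-- The epigraph is convex. -/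
lemma epi_convex {g : Eu m → EReal} (hgc : EConvexOn g) :
    Convex ℝ {p : Eu m × ℝ | g p.1 ≤ (p.2 : EReal)} := by
  rintro ⟨z1, t1⟩ h1 ⟨z2, t2⟩ h2 a b ha hb hab
  simp only [Set.mem_setOf_eq] at h1 h2 ⊢
  calc g (a • z1 + b • z2) ≤ (a : EReal) * g z1 + (b : EReal) * g z2 := hgc z1 z2 a b ha hb hab
    _ ≤ (a : EReal) * (t1 : EReal) + (b : EReal) * (t2 : EReal) :=
        add_le_add (mul_le_mul_of_nonneg_left h1 (EReal.coe_nonneg.2 ha))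
          (mul_le_mul_of_nonneg_left h2 (EReal.coe_nonneg.2 hb))
    _ = ((a * t1 + b * t2 : ℝ) : EReal) := by
        rw [← EReal.coe_mul, ← EReal.coe_mul, ← EReal.coe_add]

/-- The epigraph is closed. -/
lemma epi_closed {g : Eu m → EReal} (hglsc : LowerSemicontinuous g) :
    IsClosed {p : Eu m × ℝ | g p.1 ≤ (p.2 : EReal)} := by
  rw [← isOpen_compl_iff]
  rw [isOpen_iff_mem_nhds]
  rintro ⟨z, t⟩ hp
  simp only [Set.mem_compl_iff, Set.mem_setOf_eq, not_le] at hp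
  obtain ⟨t₁, ht1, ht2⟩ := EReal.lt_iff_exists_real_btwn.1 hp
  have h1 : {z' | (t₁ : EReal) < g z'} ∈ 𝓝 z := hglsc z (t₁ : EReal) ht2
  have h2 : Set.Iio t₁ ∈ 𝓝 t := Iio_mem_nhds (by exact_mod_cast ht1)
  rw [nhds_prod_eq]
  refine Filter.mem_of_superset (Filter.prod_mem_prod h1 h2) ?_
  rintro ⟨z', t'⟩ ⟨hz', ht'⟩
  simp only [Set.mem_compl_iff, Set.mem_setOf_eq, not_le]
  exact lt_trans (by exact_mod_cast ht') hz'

/-- Separation of a point below the epigraph, in decomposed form. -/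
lemma sep_point {g : Eu m → EReal} (hgp : EProper g) (hglsc : LowerSemicontinuous g)
    (hgc : EConvexOn g) (zb : Eu m) (r : ℝ) (hr : (r : EReal) < g zb) :
    ∃ (y₀ : Eu m) (a u : ℝ), a ≤ 0 ∧
      (∀ (z : Eu m) (t : ℝ), g z ≤ (t : EReal) → inner ℝ z y₀ + t * a < u) ∧
      u < inner ℝ zb y₀ + r * a := by
  set S := {p : Eu m × ℝ | g p.1 ≤ (p.2 : EReal)} with hS
  have hx : (zb, r) ∉ S := by simp only [hS, Set.mem_setOf_eq, not_le]; exact hr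
  obtain ⟨f, u, hfu, hru⟩ := geometric_hahn_banach_closed_point (epi_convex hgc)
    (epi_closed hglsc) hx
  set a : ℝ := f (0, 1) with ha
  set φ : Eu m →L[ℝ] ℝ := f.comp (ContinuousLinearMap.inl ℝ (Eu m) ℝ) with hφ
  have hdec : ∀ (z : Eu m) (t : ℝ), f (z, t) = φ z + t * a := by
    intro z t
    have : (z, t) = (z, (0:ℝ)) + t • ((0 : Eu m), (1:ℝ)) := by
      simp [Prod.ext_iff]
    rw [this, map_add, map_smul]
    simp [hφ, ha, ContinuousLinearMap.inl, smul_eq_mul]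
  set y₀ : Eu m := (InnerProductSpace.toDual ℝ (Eu m)).symm φ with hy₀
  have hrep : ∀ z : Eu m, φ z = inner ℝ z y₀ := by
    intro z
    rw [hy₀, real_inner_comm]
    exact (InnerProductSpace.toDual_symm_apply).symm
  -- a ≤ 0
  obtain ⟨z₀, hz₀⟩ := hgp.1
  obtain ⟨t₀, ht₀⟩ := ereal_real hgp hz₀
  have hmem : ∀ t : ℝ, t₀ ≤ t → φ z₀ + t * a < u := by
    intro t ht
    have : (z₀, t) ∈ S := by
      simp only [hS, Set.mem_setOf_eq, ht₀]; exact_mod_cast ht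
    have := hfu _ this
    rwa [hdec] at this
  have hA : a ≤ 0 := by
    by_contra hpos
    push_neg at hpos
    have h1 := hmem (max t₀ ((u - φ z₀) / a + 1)) (le_max_left _ _)
    have h2 : (u - φ z₀) / a + 1 ≤ max t₀ ((u - φ z₀) / a + 1) := le_max_right _ _
    have h3 : ((u - φ z₀) / a + 1) * a ≤ max t₀ ((u - φ z₀) / a + 1) * a :=
      mul_le_mul_of_nonneg_right h2 hpos.le
    rw [add_mul, div_mul_cancel₀ _ hpos.ne', one_mul] at h3
    linarith
  refine ⟨y₀, a, u, hA, ?_, ?_⟩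
  · intro z t hzt
    have : (z, t) ∈ S := hzt
    have := hfu _ this
    rw [hdec, hrep] at this
    exact this
  · have := hru
    rw [hdec, hrep] at this
    exact this

/-- Existence of an affine minorant. -/
lemma affine_minorant {g : Eu m → EReal} (hgp : EProper g) (hglsc : LowerSemicontinuous g)
    (hgc : EConvexOn g) :
    ∃ (y : Eu m) (b : ℝ), ∀ z, ((inner ℝ z y - b : ℝ) : EReal) ≤ g z := by
  obtain ⟨z₀, hz₀⟩ := hgp.1
  obtain ⟨t₀, ht₀⟩ := ereal_real hgp hz₀
  have hr : ((t₀ - 1 : ℝ) : EReal) < g z₀ := by rw [ht₀]; exact_mod_cast (by linarith)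
  obtain ⟨y₀, a, u, hA, hlt, hgt⟩ := sep_point hgp hglsc hgc z₀ (t₀ - 1) hr
  have haneg : a < 0 := by
    rcases lt_or_eq_of_le hA with h | h
    · exact h
    · exfalso
      have h1 := hlt z₀ t₀ (le_of_eq ht₀)
      rw [h, mul_zero] at h1 hgt
      linarith
  have hna : (0:ℝ) < -a := by linarith
  refine ⟨(-a)⁻¹ • y₀, -(u / a), fun z => ?_⟩
  rcases eq_or_ne (g z) ⊤ with ht | ht
  · rw [ht]; exact le_top
  obtain ⟨t, hgt'⟩ := ereal_real hgp ht
  rw [hgt', EReal.coe_le_coe_iff]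
  have h1 := hlt z t (le_of_eq hgt')
  rw [inner_smul_right, sub_neg_eq_add, ← sub_nonneg]
  have e : ∀ P : ℝ, t - ((-a)⁻¹ * P + u / a) = (u - (P + t * a)) / (-a) := by
    intro P; field_simp [haneg.ne]; ring
  rw [e]
  exact div_nonneg (by linarith) hna.le

end Sep
section FM
variable {m : ℕ}

/-- Pointwise Fenchel–Moreau: any real `r < g zb` is dominated by an affine minorant of `g`. -/
lemma fm_point {g : Eu m → EReal} (hgp : EProper g) (hglsc : LowerSemicontinuous g)
    (hgc : EConvexOn g) (zb : Eu m) (r : ℝ) (hr : (r : EReal) < g zb) :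
    ∃ (y : Eu m) (b : ℝ), (∀ z, ((inner ℝ z y - b : ℝ) : EReal) ≤ g z) ∧
      r < inner ℝ zb y - b := by
  obtain ⟨y₀, a, u, hA, hlt, hgt⟩ := sep_point hgp hglsc hgc zb r hr
  rcases lt_or_eq_of_le hA with haneg | hzero
  · have hna : (0:ℝ) < -a := by linarith
    refine ⟨(-a)⁻¹ • y₀, -(u / a), fun z => ?_, ?_⟩
    · rcases eq_or_ne (g z) ⊤ with ht | ht
      · rw [ht]; exact le_top
      obtain ⟨t, hgt'⟩ := ereal_real hgp ht
      rw [hgt', EReal.coe_le_coe_iff]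
      have h1 := hlt z t (le_of_eq hgt')
      rw [inner_smul_right, sub_neg_eq_add, ← sub_nonneg]
      have e : ∀ P : ℝ, t - ((-a)⁻¹ * P + u / a) = (u - (P + t * a)) / (-a) := by
        intro P; field_simp [haneg.ne]; ring
      rw [e]
      exact div_nonneg (by linarith) hna.le
    · rw [inner_smul_right, sub_neg_eq_add, ← sub_pos]
      have e : ∀ P : ℝ, ((-a)⁻¹ * P + u / a) - r = (P + r * a - u) / (-a) := by
        intro P; field_simp [haneg.ne]; ring
      rw [e]
      exact div_pos (by linarith) hna
  · obtain ⟨y₁, b₁, hy₁⟩ := affine_minorant hgp hglsc hgc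
    have hdomlt : ∀ z, g z ≠ ⊤ → (inner ℝ z y₀ : ℝ) < u := by
      intro z ht
      obtain ⟨t, hgt'⟩ := ereal_real hgp ht
      have h := hlt z t (le_of_eq hgt')
      rw [hzero, mul_zero, add_zero] at h
      exact h
    have hub : u < (inner ℝ zb y₀ : ℝ) := by
      rw [hzero, mul_zero, add_zero] at hgt
      exact hgt
    set d : ℝ := inner ℝ zb y₀ - u with hd
    have hdpos : (0:ℝ) < d := by rw [hd]; linarith
    set A : ℝ := inner ℝ zb y₁ - b₁ with hA'
    set lam : ℝ := max 0 ((r - A + 1) / d) with hlam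
    have hlam0 : (0:ℝ) ≤ lam := le_max_left _ _
    refine ⟨y₁ + lam • y₀, b₁ + lam * u, fun z => ?_, ?_⟩
    · rcases eq_or_ne (g z) ⊤ with ht | ht
      · rw [ht]; exact le_top
      refine le_trans ?_ (hy₁ z)
      rw [EReal.coe_le_coe_iff, inner_add_right, inner_smul_right]
      nlinarith [mul_le_mul_of_nonneg_left (hdomlt z ht).le hlam0]
    · have hld : r - A + 1 ≤ lam * d := by
        rcases le_total (r - A + 1) 0 with h | h
        · nlinarith
        · have h2 : (r - A + 1) / d ≤ lam := le_max_right _ _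
          calc r - A + 1 = ((r - A + 1) / d) * d := by field_simp
            _ ≤ lam * d := mul_le_mul_of_nonneg_right h2 hdpos.le
      rw [inner_add_right, inner_smul_right]
      have e1 : lam * d = lam * inner ℝ zb y₀ - lam * u := by rw [hd]; ring
      have e2 : A = inner ℝ zb y₁ - b₁ := hA'
      linarith

/-- `dom (econj g)` is nonempty. -/
lemma econj_dom_nonempty {g : Eu m → EReal} (hgp : EProper g) (hglsc : LowerSemicontinuous g)
    (hgc : EConvexOn g) : ∃ (y : Eu m) (b : ℝ), econj g y ≤ (b : EReal) := by
  obtain ⟨y, b, hy⟩ := affine_minorant hgp hglsc hgc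
  refine ⟨y, b, iSup_le fun z => ?_⟩
  rcases eq_or_ne (g z) ⊤ with ht | ht
  · rw [ht, EReal.sub_top]; exact bot_le
  obtain ⟨t, hgt⟩ := ereal_real hgp ht
  have h := hy z
  rw [hgt, EReal.coe_le_coe_iff] at h
  rw [hgt, ← EReal.coe_sub, EReal.coe_le_coe_iff]
  linarith

end FM
section Deriv
open Topology Filter
variable {n : ℕ}

/-- A convex differentiable function with vanishing derivative has a global minimum. -/
lemma convex_min {F : Eu n → ℝ} (hc : ConvexOn ℝ Set.univ F) {xb : Eu n}
    (hd : HasFDerivAt F (0 : Eu n →L[ℝ] ℝ) xb) (x : Eu n) : F xb ≤ F x := by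
  by_contra hlt
  push_neg at hlt
  set φ : ℝ → ℝ := fun t => F (xb + t • (x - xb)) with hφdef
  have hγ : ∀ t : ℝ, HasDerivAt (fun s : ℝ => xb + s • (x - xb)) (x - xb) t := by
    intro t
    simpa using ((hasDerivAt_id t).smul_const (x - xb)).const_add xb
  have hφd : HasDerivAt φ 0 0 := by
    have hd' : HasFDerivAt F (0 : Eu n →L[ℝ] ℝ) (xb + (0:ℝ) • (x - xb)) := by simpa using hd
    have h := hd'.comp_hasDerivAt 0 (hγ 0)
    exact (by simpa using h : HasDerivAt (F ∘ fun s : ℝ => xb + s • (x - xb)) 0 0)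
  have hφc : ConvexOn ℝ Set.univ φ := by
    have h := hc.comp_affineMap (AffineMap.lineMap xb x : ℝ →ᵃ[ℝ] Eu n)
    have he : (F ∘ ⇑(AffineMap.lineMap xb x : ℝ →ᵃ[ℝ] Eu n)) = φ := by
      funext t
      simp [AffineMap.lineMap_apply, hφdef, add_comm]
    rw [he] at h
    simpa using h
  have key : ∀ t ∈ Set.Ioc (0:ℝ) 1, slope φ 0 t ≤ φ 1 - φ 0 := by
    rintro t ⟨ht0, ht1⟩
    have h := hφc.2 (Set.mem_univ (1:ℝ)) (Set.mem_univ (0:ℝ)) ht0.le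
      (by linarith : (0:ℝ) ≤ 1 - t) (by ring)
    simp only [smul_eq_mul, mul_one, mul_zero, add_zero] at h
    rw [slope_def_field, sub_zero, div_le_iff₀ ht0]
    nlinarith
  have hslope : Tendsto (slope φ 0) (𝓝[>] (0:ℝ)) (𝓝 0) :=
    (hasDerivAt_iff_tendsto_slope.1 hφd).mono_left
      (nhdsWithin_mono 0 (fun t ht => ne_of_gt ht))
  have hev : ∀ᶠ t in 𝓝[>] (0:ℝ), slope φ 0 t ≤ φ 1 - φ 0 := by
    filter_upwards [Ioc_mem_nhdsGT_of_mem (Set.mem_Ico.2 ⟨le_refl (0:ℝ), zero_lt_one⟩)] with t ht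
    exact key t ht
  have hle := le_of_tendsto hslope hev
  have hφ0 : φ 0 = F xb := by simp [hφdef]
  have hφ1 : φ 1 = F x := by simp [hφdef]
  rw [hφ0, hφ1] at hle
  linarith
end Deriv
section Conv
variable {n m : ℕ}

lemma minorant_conj_le {g : Eu m → EReal} (hgp : EProper g) {y : Eu m} {b : ℝ}
    (hy : ∀ z, ((inner ℝ z y - b : ℝ) : EReal) ≤ g z) : econj g y ≤ (b : EReal) := by
  refine iSup_le fun z => ?_
  rcases eq_or_ne (g z) ⊤ with ht | ht
  · rw [ht, EReal.sub_top]; exact bot_le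
  obtain ⟨t, hgt⟩ := ereal_real hgp ht
  have h := hy z
  rw [hgt, EReal.coe_le_coe_iff] at h
  rw [hgt, ← EReal.coe_sub, EReal.coe_le_coe_iff]
  linarith

/-- Pairing of a subgradient with a horizon direction is nonpositive. -/
lemma subgrad_hzn_nonpos {g : Eu m → EReal} (hgp : EProper g) {zb yb : Eu m}
    (hsub : yb ∈ esubdiff g zb) {v : Eu m} (hv : v ∈ hzn g) : (inner ℝ yb v : ℝ) ≤ 0 := by
  obtain ⟨hnt, _⟩ := subdiff_finite hgp hsub
  obtain ⟨gz, hgz⟩ := ereal_real hgp hnt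
  have h1 : g (zb + v) ≤ g zb := hv zb hnt
  have h2 := hsub (zb + v)
  rw [add_sub_cancel_left] at h2
  have h3 := le_trans h2 h1
  rw [hgz, ← EReal.coe_add, EReal.coe_le_coe_iff] at h3
  linarith

/-- Convexity of `x ↦ f x + ⟨yb, c x⟩`. -/
lemma lagr_x_convex {f : Eu n → ℝ} {g : Eu m → EReal} {c : Eu n → Eu m}
    (hfc : ConvexOn ℝ Set.univ f) (hgp : EProper g) (hcK : HznConvex g c)
    {zb : Eu m} {yb : Eu m} (hsub : yb ∈ esubdiff g zb) :
    ConvexOn ℝ Set.univ (fun x => f x + (inner ℝ yb (c x) : ℝ)) := by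
  refine ⟨convex_univ, fun x _ xp _ a b ha hb hab => ?_⟩
  have hK := hcK x xp a ha (by linarith)
  rw [show (1:ℝ) - a = b by linarith] at hK
  have hvle : (inner ℝ yb (c (a • x + b • xp) - a • c x - b • c xp) : ℝ) ≤ 0 :=
    subgrad_hzn_nonpos hgp hsub hK
  have hfle := hfc.2 (Set.mem_univ x) (Set.mem_univ xp) ha hb hab
  simp only [smul_eq_mul] at hfle ⊢
  have hexp : c (a • x + b • xp)
      = a • c x + b • c xp + (c (a • x + b • xp) - a • c x - b • c xp) := by abel
  rw [hexp, inner_add_right, inner_add_right, inner_smul_right, inner_smul_right]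
  linarith

end Conv
/-- A pair `(xb, yb)` is stationary (gradient of the Lagrangian in `x` vanishes and
`yb ∈ ∂g(c(xb))`) if and only if it is a saddle point of the Lagrangian. -/
theorem stationary_iff_saddle {n m : ℕ} (f : Eu n → ℝ) (g : Eu m → EReal) (c : Eu n → Eu m)
    (hf : ContDiff ℝ 1 f) (hfc : ConvexOn ℝ Set.univ f)
    (hgp : EProper g) (hglsc : LowerSemicontinuous g) (hgc : EConvexOn g)
    (hc : ContDiff ℝ 1 c) (hcK : HznConvex g c)
    (xb : Eu n) (yb : Eu m) :
    ((∀ d : Eu n, fderiv ℝ f xb d + (inner ℝ yb (fderiv ℝ c xb d) : ℝ) = 0) ∧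
        yb ∈ esubdiff g (c xb)) ↔
      (∀ (x : Eu n) (y : Eu m),
        Lagr f g c xb y ≤ Lagr f g c xb yb ∧ Lagr f g c xb yb ≤ Lagr f g c x yb) := by
  have hfd : HasFDerivAt f (fderiv ℝ f xb) xb := (hf.differentiable one_ne_zero xb).hasFDerivAt
  have hcd : HasFDerivAt c (fderiv ℝ c xb) xb := (hc.differentiable one_ne_zero xb).hasFDerivAt
  have hFd : HasFDerivAt (fun x => f x + (inner ℝ yb (c x) : ℝ))
      (fderiv ℝ f xb + (innerSL ℝ yb).comp (fderiv ℝ c xb)) xb :=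
    hfd.add (((innerSL ℝ yb).hasFDerivAt).comp xb hcd)
  constructor
  · rintro ⟨hstat, hsub⟩
    obtain ⟨gz, hgz, hconj⟩ := subdiff_conj hgp hsub
    have hR : Lagr f g c xb yb = ((f xb + gz : ℝ) : EReal) := by
      rw [Lagr, hconj, ← EReal.coe_sub, EReal.coe_eq_coe_iff, real_inner_comm (c xb) yb]
      ring
    intro x y
    constructor
    · rw [Lagr, hR]
      rcases eq_or_ne (econj g y) ⊤ with ht | ht
      · rw [ht, EReal.sub_top]; exact bot_le
      obtain ⟨s, hsy⟩ : ∃ s : ℝ, econj g y = (s : EReal) :=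
        ⟨(econj g y).toReal, (EReal.coe_toReal ht (econj_ne_bot hgp y)).symm⟩
      have hFY := fenchel_young g y (c xb)
      rw [hgz, hsy, ← EReal.coe_sub, EReal.coe_le_coe_iff] at hFY
      rw [hsy, ← EReal.coe_sub, EReal.coe_le_coe_iff]
      have := real_inner_comm (c xb) y
      linarith
    · rw [hR, Lagr, hconj, ← EReal.coe_sub, EReal.coe_le_coe_iff]
      have hFc := lagr_x_convex hfc hgp hcK hsub
      have hzero : (fderiv ℝ f xb + (innerSL ℝ yb).comp (fderiv ℝ c xb))
          = (0 : Eu n →L[ℝ] ℝ) := by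
        ext d
        simpa using hstat d
      have hmin := convex_min hFc (hzero ▸ hFd) x
      have := real_inner_comm (c xb) yb
      linarith
  · intro hsad
    -- `econj g yb` is finite
    have hconjfin : econj g yb ≠ ⊤ := by
      intro htop
      obtain ⟨y₁, b₁, hy₁⟩ := econj_dom_nonempty hgp hglsc hgc
      obtain ⟨s₁, hs₁⟩ : ∃ s : ℝ, econj g y₁ = (s : EReal) :=
        ⟨(econj g y₁).toReal,
          (EReal.coe_toReal (ne_top_of_le_ne_top (EReal.coe_ne_top b₁) hy₁)
            (econj_ne_bot hgp y₁)).symm⟩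
      have h := (hsad xb y₁).1
      rw [Lagr, Lagr, htop, EReal.sub_top, le_bot_iff, hs₁, ← EReal.coe_sub] at h
      exact EReal.coe_ne_bot _ h
    obtain ⟨s, hs⟩ : ∃ s : ℝ, econj g yb = (s : EReal) :=
      ⟨(econj g yb).toReal, (EReal.coe_toReal hconjfin (econj_ne_bot hgp yb)).symm⟩
    -- the subgradient property
    have hKb : g (c xb) ≤ ((inner ℝ yb (c xb) - s : ℝ) : EReal) := by
      by_contra hK
      push_neg at hK
      obtain ⟨r, hr1, hr2⟩ := EReal.lt_iff_exists_real_btwn.1 hK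
      obtain ⟨y, b, hmin, hstrict⟩ := fm_point hgp hglsc hgc (c xb) r hr2
      have hcle : econj g y ≤ (b : EReal) := minorant_conj_le hgp hmin
      have h := (hsad xb y).1
      rw [Lagr, Lagr, hs] at h
      have h2 : ((f xb + inner ℝ y (c xb) : ℝ) : EReal) - (b : EReal)
          ≤ ((f xb + inner ℝ y (c xb) : ℝ) : EReal) - econj g y :=
        EReal.sub_le_sub (le_refl _) hcle
      have h3 := le_trans h2 h
      rw [← EReal.coe_sub, ← EReal.coe_sub, EReal.coe_le_coe_iff] at h3
      rw [EReal.coe_lt_coe_iff] at hr1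
      have := real_inner_comm (c xb) y
      linarith
    have hnt : g (c xb) ≠ ⊤ := ne_top_of_le_ne_top (EReal.coe_ne_top _) hKb
    obtain ⟨gz, hgz⟩ := ereal_real hgp hnt
    have hFYb := fenchel_young g yb (c xb)
    rw [hgz, hs, ← EReal.coe_sub, EReal.coe_le_coe_iff] at hFYb
    rw [hgz, EReal.coe_le_coe_iff] at hKb
    have hsub : yb ∈ esubdiff g (c xb) := by
      intro z
      rcases eq_or_ne (g z) ⊤ with ht | ht
      · rw [ht]; exact le_top
      obtain ⟨t, hgt⟩ := ereal_real hgp ht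
      have hFY := fenchel_young g yb z
      rw [hgt, hs, ← EReal.coe_sub, EReal.coe_le_coe_iff] at hFY
      rw [hgz, hgt, ← EReal.coe_add, EReal.coe_le_coe_iff]
      have e1 := real_inner_comm (c xb) yb
      have e2 := real_inner_comm z yb
      rw [inner_sub_right]
      linarith
    refine ⟨?_, hsub⟩
    -- stationarity
    have hFge : ∀ x, (fun x => f x + (inner ℝ yb (c x) : ℝ)) xb
        ≤ (fun x => f x + (inner ℝ yb (c x) : ℝ)) x := by
      intro x
      have h := (hsad x yb).2
      rw [Lagr, Lagr, hs, ← EReal.coe_sub, ← EReal.coe_sub, EReal.coe_le_coe_iff] at h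
      dsimp only
      linarith
    have hlocmin : IsLocalMin (fun x => f x + (inner ℝ yb (c x) : ℝ)) xb :=
      Filter.Eventually.of_forall hFge
    have hzero := hlocmin.hasFDerivAt_eq_zero hFd
    intro d
    have h := ContinuousLinearMap.ext_iff.1 hzero d
    simpa using h
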